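/- arXiv:1608.08866 — 6 statements merged into one kernel-verified Lean document; each statement's English description precedes it below -/
import Mathlib

section
/- Let p ∈ ℂ[X] be a Shabat polynomial of degree n ≥ 2 in Zapponi form, written p = aₙXⁿ + aₙ₋₁Xⁿ⁻¹ + ⋯ + a₀. Then aₙ₋₁ = 0, i.e., the coefficient of Xⁿ⁻¹ in p is zero. -/
/-!
A root of `p ∓ 1` of multiplicity `m` is a critical point of `p` of multiplicity `m - 1`, and
for a Shabat polynomial there are no other critical points. Hence the critical points with
multiplicity, together with the white and the black vertices, are exactly the roots of `p - 1`
and of `p + 1` with multiplicity. Taking sums, and writing `σ = -aₙ₋₁ / aₙ` for the sum of the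
roots of `p` (which is also that of `p ∓ 1` when `n ≥ 2`), Vieta's formulas give the sum
`(n - 1) / n · σ` of the critical points, so `(n - 1) / n · σ + 1 - 1 = 2σ` and `σ = 0`.
-/

open Polynomial

namespace Polynomial

section Field

variable {k : Type*} [Field k]

theorem nextCoeff_add_C {p : k[X]} (hp : p.natDegree ≠ 1) (c : k) :
    (p + C c).nextCoeff = p.nextCoeff := by
  rcases Nat.eq_zero_or_pos p.natDegree with h0 | hpos
  · simp [nextCoeff, h0]
  rw [nextCoeff_of_natDegree_pos (by rwa [natDegree_add_C]), nextCoeff_of_natDegree_pos hpos,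
    natDegree_add_C, coeff_add, coeff_C, if_neg (by omega), add_zero]

theorem nextCoeff_derivative [CharZero k] (p : k[X]) :
    p.derivative.nextCoeff = p.nextCoeff * (p.natDegree - 1 : ℕ) := by
  rcases Nat.lt_or_ge p.natDegree 2 with hp | hp
  · interval_cases h : p.natDegree <;> simp [nextCoeff, natDegree_derivative, h]
  rw [nextCoeff_of_natDegree_pos (by rw [natDegree_derivative]; omega),
    nextCoeff_of_natDegree_pos (by omega), natDegree_derivative, coeff_derivative,
    show p.natDegree - 1 - 1 + 1 = p.natDegree - 1 by omega]
  push_cast [show 1 ≤ p.natDegree - 1 by omega]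
  ring

theorem count_roots_derivative_add_count_dedup [CharZero k] [DecidableEq k] {q : k[X]} {z : k}
    (hz : q.IsRoot z) :
    q.derivative.roots.count z + q.roots.dedup.count z = q.roots.count z := by
  by_cases hq : q = 0
  · simp [hq]
  have hmult := (rootMultiplicity_pos hq).2 hz
  rw [count_roots, count_roots, Multiset.count_dedup, if_pos ((mem_roots hq).2 hz),
    derivative_rootMultiplicity_of_root hz]
  omega

theorem roots_derivative_add_dedup_eq_of_critical_values [CharZero k] [DecidableEq k] {p : k[X]}
    (hcrit : ∀ z, p.derivative.eval z = 0 → p.eval z = 1 ∨ p.eval z = -1) :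
    p.derivative.roots + ((p - 1).roots.dedup + (p + 1).roots.dedup) =
      (p - 1).roots + (p + 1).roots := by
  ext z
  have count_eq_zero {q : k[X]} (hz : ¬ q.IsRoot z) :
      q.roots.count z = 0 ∧ q.roots.dedup.count z = 0 := by
    refine ⟨by rw [count_roots, rootMultiplicity_eq_zero hz], Multiset.count_eq_zero.2 ?_⟩
    exact fun h => hz (mem_roots'.1 (Multiset.mem_dedup.1 h)).2
  simp only [Multiset.count_add]
  by_cases hw : (p - 1).IsRoot z
  · have hb : ¬ (p + 1).IsRoot z := by
      simp only [IsRoot, eval_sub, eval_add, eval_one, sub_eq_zero] at hw ⊢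
      rw [hw]; norm_num
    have hcount := count_roots_derivative_add_count_dedup hw
    rw [derivative_sub, derivative_one, sub_zero] at hcount
    simp only [count_eq_zero hb]
    omega
  by_cases hb : (p + 1).IsRoot z
  · have hcount := count_roots_derivative_add_count_dedup hb
    rw [derivative_add, derivative_one, add_zero] at hcount
    simp only [count_eq_zero hw]
    omega
  have hd : ¬ p.derivative.IsRoot z := fun hd => by
    rcases hcrit z hd with h | h
    · exact hw (by simp [h])
    · exact hb (by simp [h])
  simp only [count_eq_zero hw, count_eq_zero hb, (count_eq_zero hd).1]

end Field

section IsAlgClosed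

variable {k : Type*} [Field k] [IsAlgClosed k]

theorem sum_roots_add_C {p : k[X]} (hp : p.natDegree ≠ 1) (c : k) :
    (p + C c).roots.sum = p.roots.sum := by
  rcases Nat.eq_zero_or_pos p.natDegree with h0 | hpos
  · rw [eq_C_of_natDegree_eq_zero h0, ← C_add, roots_C, roots_C]
  have hp0 : p ≠ 0 := ne_zero_of_natDegree_gt hpos
  have hlc : (p + C c).leadingCoeff = p.leadingCoeff := by
    rw [leadingCoeff, natDegree_add_C, coeff_add, coeff_C, if_neg hpos.ne', add_zero, leadingCoeff]
  have hvieta := (IsAlgClosed.splits (p + C c)).nextCoeff_eq_neg_sum_roots_mul_leadingCoeff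
  rw [nextCoeff_add_C hp, (IsAlgClosed.splits p).nextCoeff_eq_neg_sum_roots_mul_leadingCoeff,
    hlc] at hvieta
  exact (mul_left_cancel₀ (neg_ne_zero.2 (leadingCoeff_ne_zero.2 hp0)) hvieta).symm

theorem natDegree_mul_sum_roots_derivative [CharZero k] (p : k[X]) :
    (p.natDegree : k) * p.derivative.roots.sum = (p.natDegree - 1 : ℕ) * p.roots.sum := by
  by_cases hp0 : p = 0
  · simp [hp0]
  have hvieta := (IsAlgClosed.splits p.derivative).nextCoeff_eq_neg_sum_roots_mul_leadingCoeff
  rw [nextCoeff_derivative, (IsAlgClosed.splits p).nextCoeff_eq_neg_sum_roots_mul_leadingCoeff,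
    leadingCoeff_derivative] at hvieta
  apply mul_left_cancel₀ (leadingCoeff_ne_zero.2 hp0)
  linear_combination hvieta

end IsAlgClosed

end Polynomial

/-- A Shabat polynomial of degree `n ≥ 2` in Zapponi form (sum of distinct roots of
`p - 1` is `1`, sum of distinct roots of `p + 1` is `-1`) has vanishing coefficient
of `X^(n-1)`. -/
theorem shabat_zapponi_subleading_coeff_eq_zero
    (p : Polynomial ℂ) (n : ℕ) (hn : 2 ≤ n) (hdeg : p.natDegree = n)
    (hShabat : ∀ z : ℂ, (Polynomial.derivative p).eval z = 0 →
      p.eval z = 1 ∨ p.eval z = -1)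
    (hwhite : ((p - 1).roots.toFinset.sum id) = 1)
    (hblack : ((p + 1).roots.toFinset.sum id) = -1) :
    p.coeff (n - 1) = 0 := by
  have sum_toFinset_id (m : Multiset ℂ) : m.toFinset.sum id = m.dedup.sum := by
    rw [Finset.sum, Multiset.toFinset_val, Multiset.map_id]
  have hdeg1 : p.natDegree ≠ 1 := by omega
  have hsum := congrArg Multiset.sum (roots_derivative_add_dedup_eq_of_critical_values hShabat)
  have hw : (p - 1).roots.sum = p.roots.sum := by
    rw [sub_eq_add_neg, ← C_1, ← C_neg]; exact sum_roots_add_C hdeg1 _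
  have hb : (p + 1).roots.sum = p.roots.sum := by
    rw [← C_1]; exact sum_roots_add_C hdeg1 _
  simp only [Multiset.sum_add, ← sum_toFinset_id, hwhite, hblack, hw, hb] at hsum
  have hcrit := natDegree_mul_sum_roots_derivative p
  rw [hdeg, Nat.cast_sub (by omega : 1 ≤ n), Nat.cast_one] at hcrit
  have hsum_roots : p.roots.sum = 0 := by
    have : ((n : ℂ) + 1) * p.roots.sum = 0 := by linear_combination hcrit - (n : ℂ) * hsum
    exact (mul_eq_zero.1 this).resolve_left (by exact_mod_cast n.succ_ne_zero)
  rw [← hdeg, ← nextCoeff_of_natDegree_pos (by omega),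
    (IsAlgClosed.splits p).nextCoeff_eq_neg_sum_roots_mul_leadingCoeff, hsum_roots, mul_zero]
end

section
/- Let p ∈ ℂ[X] be a Shabat polynomial of degree n ≥ 2 whose coefficient of Xⁿ⁻¹ is zero. Then the sum of the distinct complex roots of p − 1 equals the negative of the sum of the distinct complex roots of p + 1. -/
/-!
Every root of `p'` is a root of `p - c` for a critical value `c`, and a root of `p - c` of
multiplicity `m` is a root of `p'` of multiplicity `m - 1`. Hence the roots of `p'` are exactly
the roots of the polynomials `p - c` with each distinct root counted once less. Since `p`,
`p - c` and `p'` all have vanishing subleading coefficient, their root sums vanish, so the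
distinct roots of all the `p - c` sum to zero.
-/

open Polynomial

theorem Multiset.count_sub_dedup {α : Type*} [DecidableEq α] (s : Multiset α) (a : α) :
    (s - s.dedup).count a = s.count a - 1 := by
  rw [count_sub, count_dedup]
  split_ifs with ha
  · rfl
  · rw [count_eq_zero_of_notMem ha]

namespace Polynomial

theorem sum_roots_eq_zero_of_nextCoeff_eq_zero {K : Type*} [Field K] [IsAlgClosed K] {p : K[X]}
    (h : p.nextCoeff = 0) : p.roots.sum = 0 := by
  rcases eq_or_ne p 0 with rfl | hp
  · simp
  have hsum := (IsAlgClosed.splits p).nextCoeff_eq_neg_sum_roots_mul_leadingCoeff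
  rw [h, eq_comm, neg_mul, neg_eq_zero, mul_eq_zero] at hsum
  exact hsum.resolve_left (leadingCoeff_ne_zero.mpr hp)

theorem nextCoeff_sub_C {R : Type*} [Ring R] {p : R[X]} (hp : 2 ≤ p.natDegree) (c : R) :
    (p - C c).nextCoeff = p.nextCoeff := by
  rw [nextCoeff_of_natDegree_pos (by rw [natDegree_sub_C]; omega),
    nextCoeff_of_natDegree_pos (by omega), natDegree_sub_C, coeff_sub, coeff_C,
    if_neg (by omega), sub_zero]

theorem nextCoeff_derivative_s1 {R : Type*} [Semiring R] [IsAddTorsionFree R] (p : R[X]) :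
    (derivative p).nextCoeff = p.nextCoeff * (p.natDegree - 1 : ℕ) := by
  rcases lt_or_ge p.natDegree 2 with hp | hp
  · rw [nextCoeff_eq_zero.mpr (.inl (by rw [natDegree_derivative]; omega))]
    interval_cases h : p.natDegree <;> simp [nextCoeff, h]
  rw [nextCoeff_of_natDegree_pos (by rw [natDegree_derivative]; omega),
    nextCoeff_of_natDegree_pos (by omega), natDegree_derivative, coeff_derivative,
    ← Nat.cast_add_one, show p.natDegree - 1 - 1 + 1 = p.natDegree - 1 by omega]

section CharZero

variable {K : Type*} [Field K] [CharZero K] [DecidableEq K]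

theorem count_roots_derivative (p : K[X]) (z : K) :
    (derivative p).roots.count z = (p - C (p.eval z)).roots.count z - 1 := by
  rw [count_roots, count_roots, ← derivative_rootMultiplicity_of_root (by simp)]
  simp

theorem roots_derivative_eq_sum_sub_dedup (p : K[X]) (S : Finset K)
    (hS : ∀ z, (derivative p).eval z = 0 → p.eval z ∈ S) :
    (derivative p).roots = ∑ c ∈ S, ((p - C c).roots - (p - C c).roots.dedup) := by
  ext z
  have hfibre : ∀ c ≠ p.eval z, (p - C c).roots.count z = 0 := fun c hc => by
    rw [count_roots, rootMultiplicity_eq_zero]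
    simpa [sub_eq_zero] using hc.symm
  simp_rw [Multiset.count_sum', Multiset.count_sub_dedup]
  by_cases hz : p.eval z ∈ S
  · rw [Finset.sum_eq_single_of_mem _ hz fun c _ hc => by rw [hfibre c hc, Nat.zero_sub],
      count_roots_derivative]
  · have hcrit : (derivative p).eval z ≠ 0 := fun h => hz (hS z h)
    rw [Finset.sum_eq_zero fun c hc => by
        rw [hfibre c (by rintro rfl; exact hz hc), Nat.zero_sub],
      count_roots, rootMultiplicity_eq_zero hcrit]

theorem sum_sum_toFinset_roots_sub_C_eq_zero [IsAlgClosed K] {p : K[X]} (hp : 2 ≤ p.natDegree)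
    (hnext : p.nextCoeff = 0) (S : Finset K)
    (hS : ∀ z, (derivative p).eval z = 0 → p.eval z ∈ S) :
    ∑ c ∈ S, ∑ z ∈ (p - C c).roots.toFinset, z = 0 := by
  have hfibre (c : K) :
      ((p - C c).roots - (p - C c).roots.dedup).sum = -∑ z ∈ (p - C c).roots.toFinset, z := by
    have hsplit := congrArg Multiset.sum
      (Multiset.sub_add_cancel (Multiset.dedup_le (p - C c).roots))
    rw [Multiset.sum_add,
      sum_roots_eq_zero_of_nextCoeff_eq_zero (by rw [nextCoeff_sub_C hp, hnext])] at hsplit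
    rw [Finset.sum_eq_multiset_sum, Multiset.toFinset_val, Multiset.map_id']
    exact eq_neg_of_add_eq_zero_left hsplit
  have hsum := congrArg Multiset.sum (roots_derivative_eq_sum_sub_dedup p S hS)
  rw [sum_roots_eq_zero_of_nextCoeff_eq_zero (by rw [nextCoeff_derivative_s1, hnext, zero_mul]),
    Multiset.sum_sum] at hsum
  simpa [hfibre] using hsum.symm

end CharZero

end Polynomial

/-- If a Shabat polynomial `p` of degree `n ≥ 2` has vanishing coefficient of
`X^(n-1)`, then the sum of the distinct complex roots of `p - 1` equals the negative
of the sum of the distinct complex roots of `p + 1`. -/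
theorem shabat_sum_white_eq_neg_sum_black
    (p : Polynomial ℂ) (n : ℕ) (hn : 2 ≤ n) (hdeg : p.natDegree = n)
    (hShabat : ∀ z : ℂ, (Polynomial.derivative p).eval z = 0 →
      p.eval z = 1 ∨ p.eval z = -1)
    (hcoeff : p.coeff (n - 1) = 0) :
    ((p - 1).roots.toFinset.sum id) = -((p + 1).roots.toFinset.sum id) := by
  have hnext : p.nextCoeff = 0 := by
    rw [nextCoeff_of_natDegree_pos (by omega), hdeg, hcoeff]
  have hsum := sum_sum_toFinset_roots_sub_C_eq_zero (hdeg ▸ hn) hnext {1, -1}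
    fun z hz => by simpa using hShabat z hz
  rw [Finset.sum_pair (by norm_num), map_one, map_neg, map_one, sub_neg_eq_add] at hsum
  exact eq_neg_of_add_eq_zero_left hsum
end

section
/- Let p, q ∈ ℂ[X] be Shabat polynomials of degree n ≥ 2, both in Zapponi form, and suppose there exist α, β ∈ ℂ with α ≠ 0 such that q(z) = p(αz + β) for all z ∈ ℂ. Then α = 1 and β = 0; in particular q = p. (Uniqueness of the Shabat–Zapponi polynomial of a plane tree.) -/
/-!
An affine substitution `z ↦ αz + β` maps the roots of `q ∓ 1` bijectively onto those of `p ∓ 1`,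
so the Zapponi sums satisfy `1 = α + k_w β` and `-1 = -α + k_b β`, where `k_w, k_b` count the
white and black vertices of `q`. Adding gives `(k_w + k_b) β = 0`; since the white sum is nonzero,
`k_w ≥ 1`, hence `β = 0` and then `α = 1`.
-/

open Polynomial Finset

namespace Polynomial

section AffineSubstitution

variable {K : Type*} [Field K] [Infinite K] {P Q : K[X]} {α β : K}

theorem eq_zero_iff_of_eval_affine (hα : α ≠ 0) (h : ∀ z, Q.eval z = P.eval (α * z + β)) :
    Q = 0 ↔ P = 0 := by
  constructor
  · intro hQ
    refine Polynomial.funext fun w => ?_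
    have hw : α * ((w - β) / α) + β = w := by field_simp; ring
    simpa [hQ, hw] using (h ((w - β) / α)).symm
  · rintro rfl
    exact Polynomial.funext fun z => by simp [h]

theorem image_roots_toFinset_of_eval_affine [DecidableEq K] (hα : α ≠ 0)
    (h : ∀ z, Q.eval z = P.eval (α * z + β)) :
    Q.roots.toFinset.image (fun z => α * z + β) = P.roots.toFinset := by
  have hzero := eq_zero_iff_of_eval_affine hα h
  ext w
  simp only [mem_image, Multiset.mem_toFinset, mem_roots', IsRoot.def, h]
  constructor
  · rintro ⟨z, ⟨hQ, hz⟩, rfl⟩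
    exact ⟨fun hP => hQ (hzero.2 hP), hz⟩
  · rintro ⟨hP, hw⟩
    have hpre : α * ((w - β) / α) + β = w := by field_simp; ring
    exact ⟨(w - β) / α, ⟨fun hQ => hP (hzero.1 hQ), by rwa [hpre]⟩, hpre⟩

theorem sum_roots_toFinset_of_eval_affine [DecidableEq K] (hα : α ≠ 0)
    (h : ∀ z, Q.eval z = P.eval (α * z + β)) :
    P.roots.toFinset.sum id = α * Q.roots.toFinset.sum id + #Q.roots.toFinset * β := by
  have hinj : Set.InjOn (fun z => α * z + β) Q.roots.toFinset := fun a _ b _ hab => by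
    simpa [hα] using hab
  rw [← image_roots_toFinset_of_eval_affine hα h, sum_image hinj]
  simp [sum_add_distrib, mul_sum]

end AffineSubstitution

end Polynomial

theorem shabat_zapponi_unique_general
    (p q : Polynomial ℂ)
    (hpwhite : ((p - 1).roots.toFinset.sum id) = 1)
    (hpblack : ((p + 1).roots.toFinset.sum id) = -1)
    (hqwhite : ((q - 1).roots.toFinset.sum id) = 1)
    (hqblack : ((q + 1).roots.toFinset.sum id) = -1)
    (α β : ℂ) (hα : α ≠ 0)
    (hcomp : ∀ z : ℂ, q.eval z = p.eval (α * z + β)) :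
    α = 1 ∧ β = 0 ∧ q = p := by
  have white := sum_roots_toFinset_of_eval_affine (P := p - 1) (Q := q - 1) (β := β) hα
    (by simp [hcomp])
  have black := sum_roots_toFinset_of_eval_affine (P := p + 1) (Q := q + 1) (β := β) hα
    (by simp [hcomp])
  rw [hpwhite, hqwhite] at white
  rw [hpblack, hqblack] at black
  have hwhite_pos : 0 < #(q - 1).roots.toFinset :=
    card_pos.2 (nonempty_of_sum_ne_zero (hqwhite ▸ one_ne_zero))
  have hβ : β = 0 := by
    have hcount : ((#(q - 1).roots.toFinset + #(q + 1).roots.toFinset : ℕ) : ℂ) ≠ 0 :=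
      Nat.cast_ne_zero.2 (by omega)
    have hsum : ((#(q - 1).roots.toFinset + #(q + 1).roots.toFinset : ℕ) : ℂ) * β = 0 := by
      push_cast
      linear_combination -white - black
    exact (mul_eq_zero.1 hsum).resolve_left hcount
  have hα1 : α = 1 := by simpa [hβ] using white.symm
  exact ⟨hα1, hβ, Polynomial.funext fun z => by simp [hcomp, hα1, hβ]⟩

/-- Uniqueness of the Shabat–Zapponi polynomial: if two Shabat polynomials of degree
`n ≥ 2` are both in Zapponi form and differ by an affine change of variable
`z ↦ αz + β` with `α ≠ 0`, then `α = 1`, `β = 0`, and the polynomials are equal. -/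
theorem shabat_zapponi_unique
    (p q : Polynomial ℂ) (n : ℕ) (hn : 2 ≤ n)
    (hpdeg : p.natDegree = n) (hqdeg : q.natDegree = n)
    (hpShabat : ∀ z : ℂ, (Polynomial.derivative p).eval z = 0 →
      p.eval z = 1 ∨ p.eval z = -1)
    (hqShabat : ∀ z : ℂ, (Polynomial.derivative q).eval z = 0 →
      q.eval z = 1 ∨ q.eval z = -1)
    (hpwhite : ((p - 1).roots.toFinset.sum id) = 1)
    (hpblack : ((p + 1).roots.toFinset.sum id) = -1)
    (hqwhite : ((q - 1).roots.toFinset.sum id) = 1)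
    (hqblack : ((q + 1).roots.toFinset.sum id) = -1)
    (α β : ℂ) (hα : α ≠ 0)
    (hcomp : ∀ z : ℂ, q.eval z = p.eval (α * z + β)) :
    α = 1 ∧ β = 0 ∧ q = p :=
  shabat_zapponi_unique_general p q hpwhite hpblack hqwhite hqblack α β hα hcomp
end

section
/- Let p ∈ ℂ[X] be a Shabat polynomial of degree n ≥ 2 with leading coefficient aₙ. Let x₁, …, x_s be the distinct roots of p − 1 with multiplicities k₁, …, k_s, and y₁, …, y_t the distinct roots of p + 1 with multiplicities l₁, …, l_t. Then the derivative of p factors as p'(X) = n·aₙ · ∏_{i=1}^{s} (X − xᵢ)^{kᵢ−1} · ∏_{j=1}^{t} (X − yⱼ)^{lⱼ−1}. -/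
/-!
In characteristic zero, a root `z` of `p - c` of multiplicity `k` is a root of `p'` of
multiplicity `k - 1`. When every critical value of `p` is `1` or `-1`, every root of `p'` is
therefore accounted for by the roots of `p - 1` and `p + 1`, and since `p'` splits over `ℂ`
with leading coefficient `n · aₙ`, this determines `p'` completely.
-/

open Polynomial

namespace Polynomial

section IsDomain

variable {R : Type*} [CommRing R] [IsDomain R] [DecidableEq R]

theorem mem_roots_toFinset_iff_rootMultiplicity_ne_zero {f : R[X]} {z : R} :
    z ∈ f.roots.toFinset ↔ f.rootMultiplicity z ≠ 0 := by
  rw [Multiset.mem_toFinset, ← Multiset.count_ne_zero, count_roots]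

theorem prod_X_sub_C_pow_rootMultiplicity_of_subset (f : R[X]) (e : ℕ → ℕ) (he : e 0 = 0)
    {s : Finset R} (hs : f.roots.toFinset ⊆ s) :
    ∏ z ∈ s, (X - C z) ^ e (f.rootMultiplicity z) =
      ∏ z ∈ f.roots.toFinset, (X - C z) ^ e (f.rootMultiplicity z) := by
  refine (Finset.prod_subset hs fun z _ hz => ?_).symm
  rw [not_ne_iff.mp (mem_roots_toFinset_iff_rootMultiplicity_ne_zero.not.mp hz), he, pow_zero]

theorem Splits.eq_C_leadingCoeff_mul_prod_pow_rootMultiplicity {f : R[X]} (hf : f.Splits) :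
    f = C f.leadingCoeff * ∏ z ∈ f.roots.toFinset, (X - C z) ^ f.rootMultiplicity z := by
  conv_lhs => rw [hf.eq_prod_roots, Finset.prod_multiset_map_count]
  simp only [count_roots]

end IsDomain

section CharZero

variable {R : Type*} [CommRing R] [IsDomain R] [CharZero R]

theorem rootMultiplicity_derivative (f : R[X]) (z : R) :
    f.derivative.rootMultiplicity z = (f - C (f.eval z)).rootMultiplicity z - 1 := by
  rw [← derivative_rootMultiplicity_of_root (by simp), derivative_sub, derivative_C, sub_zero]

theorem rootMultiplicity_derivative_of_critical_values {f : R[X]} {a b : R} (hab : a ≠ b)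
    (hcrit : ∀ z, f.derivative.eval z = 0 → f.eval z = a ∨ f.eval z = b) (z : R) :
    f.derivative.rootMultiplicity z =
      ((f - C a).rootMultiplicity z - 1) + ((f - C b).rootMultiplicity z - 1) := by
  have hnotRoot : ∀ c, f.eval z ≠ c → (f - C c).rootMultiplicity z = 0 := fun c hc =>
    rootMultiplicity_eq_zero (by simpa [sub_eq_zero] using hc)
  by_cases ha : f.eval z = a
  · rw [rootMultiplicity_derivative, ha, hnotRoot b (ha ▸ hab), zero_tsub, add_zero]
  by_cases hb : f.eval z = b
  · rw [rootMultiplicity_derivative, hb, hnotRoot a (hb ▸ hab.symm), zero_tsub, zero_add]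
  rw [hnotRoot a ha, hnotRoot b hb, rootMultiplicity_eq_zero fun h => (hcrit z h).elim ha hb]

theorem derivative_eq_of_critical_values [DecidableEq R] {f : R[X]} (hf : f.derivative.Splits)
    {a b : R} (hab : a ≠ b) (hcrit : ∀ z, f.derivative.eval z = 0 → f.eval z = a ∨ f.eval z = b) :
    f.derivative = C (f.natDegree * f.leadingCoeff) *
      (∏ x ∈ (f - C a).roots.toFinset, (X - C x) ^ ((f - C a).rootMultiplicity x - 1)) *
      (∏ y ∈ (f - C b).roots.toFinset, (X - C y) ^ ((f - C b).rootMultiplicity y - 1)) := by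
  set s := (f - C a).roots.toFinset ∪ (f - C b).roots.toFinset
  have hmult := rootMultiplicity_derivative_of_critical_values hab hcrit
  have hroots : f.derivative.roots.toFinset ⊆ s := by
    intro z hz
    rw [mem_roots_toFinset_iff_rootMultiplicity_ne_zero, hmult] at hz
    rw [Finset.mem_union, mem_roots_toFinset_iff_rootMultiplicity_ne_zero,
      mem_roots_toFinset_iff_rootMultiplicity_ne_zero]
    omega
  calc f.derivative
      = C f.derivative.leadingCoeff * ∏ z ∈ s, (X - C z) ^ f.derivative.rootMultiplicity z :=
        hf.eq_C_leadingCoeff_mul_prod_pow_rootMultiplicity.trans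
          (congrArg _ (prod_X_sub_C_pow_rootMultiplicity_of_subset _ id rfl hroots).symm)
    _ = _ := by
        simp only [hmult, pow_add, Finset.prod_mul_distrib, leadingCoeff_derivative]
        rw [prod_X_sub_C_pow_rootMultiplicity_of_subset _ (· - 1) rfl Finset.subset_union_left,
          prod_X_sub_C_pow_rootMultiplicity_of_subset _ (· - 1) rfl Finset.subset_union_right,
          mul_comm f.leadingCoeff, mul_assoc]

end CharZero

end Polynomial

theorem shabat_derivative_factorization_general
    (p : Polynomial ℂ) (n : ℕ) (hdeg : p.natDegree = n)
    (hShabat : ∀ z : ℂ, (Polynomial.derivative p).eval z = 0 →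
      p.eval z = 1 ∨ p.eval z = -1) :
    Polynomial.derivative p =
      Polynomial.C ((n : ℂ) * p.leadingCoeff) *
      (∏ x ∈ (p - 1).roots.toFinset,
        (Polynomial.X - Polynomial.C x) ^ ((p - 1).rootMultiplicity x - 1)) *
      (∏ y ∈ (p + 1).roots.toFinset,
        (Polynomial.X - Polynomial.C y) ^ ((p + 1).rootMultiplicity y - 1)) := by
  have h := derivative_eq_of_critical_values (IsAlgClosed.splits p.derivative)
    (by norm_num : (1 : ℂ) ≠ -1) hShabat
  rwa [map_one, map_neg, map_one, sub_neg_eq_add, hdeg] at h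

/-- For a Shabat polynomial `p` of degree `n ≥ 2` with leading coefficient `aₙ`,
the derivative factors as
`p' = n·aₙ · ∏ (X − xᵢ)^(kᵢ−1) · ∏ (X − yⱼ)^(lⱼ−1)`,
where the `xᵢ` (resp. `yⱼ`) are the distinct roots of `p − 1` (resp. `p + 1`) with
multiplicities `kᵢ` (resp. `lⱼ`). -/
theorem shabat_derivative_factorization
    (p : Polynomial ℂ) (n : ℕ) (hn : 2 ≤ n) (hdeg : p.natDegree = n)
    (hShabat : ∀ z : ℂ, (Polynomial.derivative p).eval z = 0 →
      p.eval z = 1 ∨ p.eval z = -1) :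
    Polynomial.derivative p =
      Polynomial.C ((n : ℂ) * p.leadingCoeff) *
      (∏ x ∈ (p - 1).roots.toFinset,
        (Polynomial.X - Polynomial.C x) ^ ((p - 1).rootMultiplicity x - 1)) *
      (∏ y ∈ (p + 1).roots.toFinset,
        (Polynomial.X - Polynomial.C y) ^ ((p + 1).rootMultiplicity y - 1)) :=
  shabat_derivative_factorization_general p n hdeg hShabat
end

section
/- Let p ∈ ℂ[X] be a Shabat polynomial of degree n ≥ 2. Then the number of distinct complex roots of p − 1 plus the number of distinct complex roots of p + 1 equals n + 1. (The tree p⁻¹[−1,1] has n edges and n + 1 vertices.) -/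
open Polynomial

/-- For a Shabat polynomial `p` of degree `n ≥ 2`, the number of distinct complex
roots of `p - 1` plus the number of distinct complex roots of `p + 1` equals
`n + 1` (the tree `p⁻¹[-1,1]` has `n` edges and `n + 1` vertices). -/
theorem shabat_card_roots_add_card_roots
    (p : Polynomial ℂ) (n : ℕ) (hn : 2 ≤ n) (hdeg : p.natDegree = n)
    (hShabat : ∀ z : ℂ, (Polynomial.derivative p).eval z = 0 →
      p.eval z = 1 ∨ p.eval z = -1) :
    (p - 1).roots.toFinset.card + (p + 1).roots.toFinset.card = n + 1 := by
  -- basic degree facts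
  have hdm : (p - 1).natDegree = n := by
    rw [show (p - 1 : ℂ[X]) = p - C 1 by simp, natDegree_sub_C, hdeg]
  have hdp : (p + 1).natDegree = n := by
    rw [show (p + 1 : ℂ[X]) = p + C 1 by simp, natDegree_add_C, hdeg]
  have hm0 : (p - 1) ≠ 0 := fun h => by simp [h] at hdm; omega
  have hp0 : (p + 1) ≠ 0 := fun h => by simp [h] at hdp; omega
  have hderiv_deg : (derivative p).degree = ((n - 1 : ℕ) : WithBot ℕ) := by
    rw [degree_derivative_eq p (by omega), hdeg]
  have hd0 : derivative p ≠ 0 := by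
    intro h
    rw [h, degree_zero] at hderiv_deg
    exact (by simp : (⊥ : WithBot ℕ) ≠ ((n - 1 : ℕ) : WithBot ℕ)) hderiv_deg
  have hdnat : (derivative p).natDegree = n - 1 :=
    natDegree_eq_of_degree_eq_some hderiv_deg
  -- cards of root multisets
  have hcard_m : Multiset.card (p - 1).roots = n := by
    rw [splits_iff_card_roots.mp (IsAlgClosed.splits _), hdm]
  have hcard_p : Multiset.card (p + 1).roots = n := by
    rw [splits_iff_card_roots.mp (IsAlgClosed.splits _), hdp]
  have hcard_d : Multiset.card (derivative p).roots = n - 1 := by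
    rw [splits_iff_card_roots.mp (IsAlgClosed.splits _), hdnat]
  set A := (p - 1).roots.toFinset with hA
  set B := (p + 1).roots.toFinset with hB
  -- membership characterizations
  have hmemA : ∀ z, z ∈ A ↔ p.eval z = 1 := by
    intro z
    rw [hA, Multiset.mem_toFinset, mem_roots hm0]
    simp [IsRoot, sub_eq_zero]
  have hmemB : ∀ z, z ∈ B ↔ p.eval z = -1 := by
    intro z
    rw [hB, Multiset.mem_toFinset, mem_roots hp0]
    simp [IsRoot, eq_neg_iff_add_eq_zero]
  -- disjointness
  have hdisj : Disjoint A B := by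
    rw [Finset.disjoint_left]
    intro z hzA hzB
    rw [hmemA] at hzA; rw [hmemB] at hzB
    rw [hzA] at hzB
    norm_num at hzB
  -- multiplicity relations: on A, mult in p-1 = mult in p' + 1
  have hmultA : ∀ z ∈ A, rootMultiplicity z (p - 1)
      = rootMultiplicity z (derivative p) + 1 := by
    intro z hz
    have hroot : (p - 1).IsRoot z := by
      simp [IsRoot, sub_eq_zero, (hmemA z).mp hz]
    have h1 : rootMultiplicity z (derivative (p - 1))
        = rootMultiplicity z (p - 1) - 1 := derivative_rootMultiplicity_of_root hroot
    have h2 : derivative (p - 1) = derivative p := by simp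
    have h3 : 1 ≤ rootMultiplicity z (p - 1) :=
      (rootMultiplicity_pos hm0).mpr hroot
    rw [h2] at h1
    omega
  have hmultB : ∀ z ∈ B, rootMultiplicity z (p + 1)
      = rootMultiplicity z (derivative p) + 1 := by
    intro z hz
    have hroot : (p + 1).IsRoot z := by
      simp [IsRoot, (hmemB z).mp hz]
    have h1 : rootMultiplicity z (derivative (p + 1))
        = rootMultiplicity z (p + 1) - 1 := derivative_rootMultiplicity_of_root hroot
    have h2 : derivative (p + 1) = derivative p := by simp
    have h3 : 1 ≤ rootMultiplicity z (p + 1) :=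
      (rootMultiplicity_pos hp0).mpr hroot
    rw [h2] at h1
    omega
  -- sums of multiplicities
  have hsumA : ∑ z ∈ A, rootMultiplicity z (p - 1) = n := by
    rw [← hcard_m, ← Multiset.toFinset_sum_count_eq]
    exact Finset.sum_congr rfl fun z _ => (count_roots _).symm
  have hsumB : ∑ z ∈ B, rootMultiplicity z (p + 1) = n := by
    rw [← hcard_p, ← Multiset.toFinset_sum_count_eq]
    exact Finset.sum_congr rfl fun z _ => (count_roots _).symm
  -- every root of p' is in A ∪ B
  have hsub : (derivative p).roots.toFinset ⊆ A ∪ B := by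
    intro z hz
    rw [Multiset.mem_toFinset, mem_roots hd0] at hz
    rcases hShabat z hz with h | h
    · exact Finset.mem_union_left _ ((hmemA z).mpr h)
    · exact Finset.mem_union_right _ ((hmemB z).mpr h)
  have hsumD : ∑ z ∈ A ∪ B, rootMultiplicity z (derivative p) = n - 1 := by
    rw [← hcard_d, ← Multiset.toFinset_sum_count_eq]
    rw [show ∑ a ∈ (derivative p).roots.toFinset, (derivative p).roots.count a
        = ∑ a ∈ (derivative p).roots.toFinset, rootMultiplicity a (derivative p) from
      Finset.sum_congr rfl fun z _ => count_roots _]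
    symm
    apply Finset.sum_subset hsub
    intro z _ hz
    rw [Multiset.mem_toFinset] at hz
    exact rootMultiplicity_eq_zero fun hroot => hz ((mem_roots hd0).mpr hroot)
  -- put things together
  have hAeq : ∑ z ∈ A, rootMultiplicity z (derivative p) + A.card = n := by
    rw [← hsumA, Finset.sum_congr rfl hmultA, Finset.sum_add_distrib]
    simp
  have hBeq : ∑ z ∈ B, rootMultiplicity z (derivative p) + B.card = n := by
    rw [← hsumB, Finset.sum_congr rfl hmultB, Finset.sum_add_distrib]
    simp
  have hsplit : ∑ z ∈ A, rootMultiplicity z (derivative p)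
      + ∑ z ∈ B, rootMultiplicity z (derivative p) = n - 1 := by
    rw [← Finset.sum_union hdisj, hsumD]
  omega
end

section
/- The polynomial p(z) = (3z+1)⁴(3z−4)/128 + 1 is a Shabat polynomial in Zapponi form: every critical value of p lies in {1, −1} (explicitly, its critical points are −1/3 and 1, with p(−1/3) = 1 and p(1) = −1), the sum of the distinct complex roots of p − 1 equals 1, and the sum of the distinct complex roots of p + 1 equals −1. -/
/-!
Both `p - 1` and `p + 1` factor explicitly:
`p - 1 = (243/128) (z + 1/3)⁴ (z - 4/3)` and `p + 1 = (243/128) (z - 1)² M(z)` with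
`M = z³ + 2z² + (17/9) z + 28/27` separable and `M(1) ≠ 0`. The distinct roots of each are thus
a repeated root together with the simple roots of a separable monic factor, whose sum Vieta reads
off the subleading coefficient. Likewise `p' = (45/128) (3z + 1)³ (z - 1)`.
-/

open Polynomial

/-- The polynomial `p(z) = (3z+1)⁴(3z−4)/128 + 1`. -/
noncomputable def pSZ : Polynomial ℂ :=
  Polynomial.C (1 / 128 : ℂ) * (3 * Polynomial.X + 1) ^ 4 * (3 * Polynomial.X - 4) + 1

namespace Polynomial

variable {K : Type*} [Field K] [DecidableEq K]

theorem Separable.sum_roots_toFinset_eq_neg_nextCoeff {q : K[X]} (hsep : q.Separable)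
    (hm : q.Monic) (hs : q.Splits) : q.roots.toFinset.sum id = -q.nextCoeff := by
  rw [hs.nextCoeff_eq_neg_sum_roots_of_monic hm, neg_neg, Finset.sum, Multiset.toFinset_val,
    (nodup_roots hsep).dedup, Multiset.map_id]

theorem roots_toFinset_C_mul_X_sub_C_pow_mul {c a : K} {n : ℕ} {q : K[X]} (hc : c ≠ 0)
    (hn : n ≠ 0) (hq : q ≠ 0) :
    (C c * (X - C a) ^ n * q).roots.toFinset = insert a q.roots.toFinset := by
  rw [mul_assoc, roots_C_mul _ hc, roots_mul (mul_ne_zero (pow_ne_zero _ (X_sub_C_ne_zero a)) hq),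
    roots_pow, roots_X_sub_C, Multiset.toFinset_add, Multiset.toFinset_nsmul _ _ hn,
    Multiset.toFinset_singleton, Finset.insert_eq]

theorem sum_roots_toFinset_C_mul_X_sub_C_pow_mul {c a : K} {n : ℕ} {q : K[X]} (hc : c ≠ 0)
    (hn : n ≠ 0) (hm : q.Monic) (hsep : q.Separable) (hs : q.Splits) (ha : ¬q.IsRoot a) :
    (C c * (X - C a) ^ n * q).roots.toFinset.sum id = a - q.nextCoeff := by
  have ha' : a ∉ q.roots.toFinset := by simpa [hm.ne_zero] using ha
  rw [roots_toFinset_C_mul_X_sub_C_pow_mul hc hn hm.ne_zero, Finset.sum_insert ha',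
    hsep.sum_roots_toFinset_eq_neg_nextCoeff hm hs, id, sub_eq_add_neg]

end Polynomial

theorem pSZ_sub_one_eq : pSZ - 1 = C (243 / 128 : ℂ) * (X - C (-1 / 3)) ^ 4 * (X - C (4 / 3)) :=
  Polynomial.funext fun x ↦ by
    simp only [pSZ, eval_add, eval_sub, eval_mul, eval_pow, eval_C, eval_X, eval_one, eval_ofNat]
    ring

noncomputable def pSZCubicFactor : ℂ[X] :=
  X ^ 3 + C 2 * X ^ 2 + C (17 / 9) * X + C (28 / 27)

theorem pSZ_add_one_eq : pSZ + 1 = C (243 / 128 : ℂ) * (X - C 1) ^ 2 * pSZCubicFactor :=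
  Polynomial.funext fun x ↦ by
    simp only [pSZ, pSZCubicFactor, eval_add, eval_sub, eval_mul, eval_pow, eval_C, eval_X,
      eval_one, eval_ofNat]
    ring

theorem pSZCubicFactor_monic : pSZCubicFactor.Monic := by
  unfold pSZCubicFactor; monicity!

theorem pSZCubicFactor_nextCoeff : pSZCubicFactor.nextCoeff = 2 := by
  have hdeg : pSZCubicFactor.natDegree = 3 := by unfold pSZCubicFactor; compute_degree!
  rw [nextCoeff, hdeg]
  simp [pSZCubicFactor]

theorem pSZCubicFactor_separable : pSZCubicFactor.Separable := by
  refine ⟨C (-9 / 320) * (81 * X - 27), C (9 / 320) * (27 * X ^ 2 + 9 * X + 4), ?_⟩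
  refine Polynomial.funext fun x ↦ ?_
  simp only [pSZCubicFactor, derivative_add, derivative_mul, derivative_X_pow, derivative_C,
    derivative_X, eval_add, eval_sub, eval_mul, eval_pow, eval_C, eval_X, eval_zero, eval_one,
    eval_ofNat]
  ring

theorem pSZCubicFactor_not_isRoot_one : ¬pSZCubicFactor.IsRoot 1 := by
  norm_num [pSZCubicFactor]

theorem derivative_pSZ : derivative pSZ = C (45 / 128) * (3 * X + 1) ^ 3 * (X - 1) :=
  Polynomial.funext fun x ↦ by
    simp only [pSZ, derivative_add, derivative_sub, derivative_mul, derivative_pow, derivative_C,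
      derivative_X, derivative_ofNat, derivative_one, eval_add, eval_sub, eval_mul, eval_pow,
      eval_C, eval_X, eval_zero, eval_one, eval_ofNat]
    ring

theorem derivative_pSZ_eval_eq_zero_iff (z : ℂ) :
    (derivative pSZ).eval z = 0 ↔ z = -1 / 3 ∨ z = 1 := by
  have h3 : 3 * z + 1 = 0 ↔ z = -1 / 3 :=
    ⟨fun h ↦ by linear_combination h / 3, fun h ↦ by linear_combination 3 * h⟩
  simp [derivative_pSZ, sub_eq_zero, h3]

theorem pSZ_eval_neg_one_third : pSZ.eval (-1 / 3) = 1 := by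
  norm_num [pSZ]

theorem pSZ_eval_one : pSZ.eval 1 = -1 := by
  norm_num [pSZ]

theorem sum_roots_toFinset_pSZ_sub_one : (pSZ - 1).roots.toFinset.sum id = 1 := by
  rw [pSZ_sub_one_eq, sum_roots_toFinset_C_mul_X_sub_C_pow_mul (by norm_num) (by norm_num)
    (monic_X_sub_C _) separable_X_sub_C (Splits.X_sub_C _) (by norm_num),
    nextCoeff_X_sub_C]
  norm_num

theorem sum_roots_toFinset_pSZ_add_one : (pSZ + 1).roots.toFinset.sum id = -1 := by
  rw [pSZ_add_one_eq, sum_roots_toFinset_C_mul_X_sub_C_pow_mul (by norm_num) (by norm_num)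
    pSZCubicFactor_monic pSZCubicFactor_separable (IsAlgClosed.splits _)
    pSZCubicFactor_not_isRoot_one, pSZCubicFactor_nextCoeff]
  norm_num

/-- `p(z) = (3z+1)⁴(3z−4)/128 + 1` is a Shabat polynomial in Zapponi form: its
critical points are `-1/3` and `1` with `p(-1/3) = 1` and `p(1) = -1`, every
critical value lies in `{1, -1}`, and the sums of the distinct roots of `p - 1`
and `p + 1` are `1` and `-1` respectively. -/
theorem pSZ_is_shabat_zapponi :
    (∀ z : ℂ, (Polynomial.derivative pSZ).eval z = 0 ↔ z = -1/3 ∨ z = 1) ∧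
    pSZ.eval (-1/3 : ℂ) = 1 ∧ pSZ.eval (1 : ℂ) = -1 ∧
    (∀ z : ℂ, (Polynomial.derivative pSZ).eval z = 0 →
      pSZ.eval z = 1 ∨ pSZ.eval z = -1) ∧
    ((pSZ - 1).roots.toFinset.sum id) = 1 ∧
    ((pSZ + 1).roots.toFinset.sum id) = -1 := by
  refine ⟨derivative_pSZ_eval_eq_zero_iff, pSZ_eval_neg_one_third, pSZ_eval_one, ?_,
    sum_roots_toFinset_pSZ_sub_one, sum_roots_toFinset_pSZ_add_one⟩
  intro z hz
  rcases (derivative_pSZ_eval_eq_zero_iff z).mp hz with rfl | rfl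
  · exact Or.inl pSZ_eval_neg_one_third
  · exact Or.inr pSZ_eval_one
end
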